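/- Gao's quantum union bound (corollary): let ρ be a density matrix on ℂ^d and let P₁, ..., P_L be orthogonal projection matrices on ℂ^d. Then 1 − Tr(P_L P_{L-1} ⋯ P₁ ρ P₁ ⋯ P_{L-1} P_L) ≤ 4 · ∑_{i=1}^{L} Tr((I − P_i) ρ). -/

import Mathlib

/-!
Along `Mₜ = Pₜ ⋯ P₁` the potential `4 Re Tr ((1 - Mₜ) ρ) + Tr (Mₜᴴ Mₜ ρ)` grows by at most
`4 Tr ((1 - Pₜ₊₁) ρ)` per step: this is AM-GM for the semi-inner product `⟨X, Y⟩ = Tr (Xᴴ Y ρ)`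
applied to `X = 1 - Pₜ₊₁` and `Y = X Mₜ`, whose pairings telescope. The potential starts at
`Tr ρ = 1`, and positivity of `(1 - M)ᴴ (1 - M)` bounds it below by `2 - Tr (M ρ Mᴴ)`.
-/

open scoped ComplexOrder
open Matrix

/-- `descM P k = P k * P (k-1) * ⋯ * P 1`, empty product is the identity matrix. -/
noncomputable def descM {d : ℕ} (P : ℕ → Matrix (Fin d) (Fin d) ℂ) : ℕ → Matrix (Fin d) (Fin d) ℂ
  | 0 => 1
  | k + 1 => P (k + 1) * descM P k

/-- `ascM P k = P 1 * P 2 * ⋯ * P k`, empty product is the identity matrix. -/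
noncomputable def ascM {d : ℕ} (P : ℕ → Matrix (Fin d) (Fin d) ℂ) : ℕ → Matrix (Fin d) (Fin d) ℂ
  | 0 => 1
  | k + 1 => ascM P k * P (k + 1)

namespace Matrix

variable {n : Type*} [Fintype n] {ρ : Matrix n n ℂ}

theorem re_trace_conjTranspose_mul_self_mul_nonneg (hρ : ρ.PosSemidef) (X : Matrix n n ℂ) :
    0 ≤ (Xᴴ * X * ρ).trace.re := by
  have h : 0 ≤ (X * ρ * Xᴴ).trace := (hρ.mul_mul_conjTranspose_same X).trace_nonneg
  rw [Matrix.mul_assoc, trace_mul_comm]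
  exact (Complex.nonneg_iff.mp h).1

theorem re_trace_conjTranspose_mul_mul_comm (hρ : ρ.IsHermitian) (X Y : Matrix n n ℂ) :
    (Yᴴ * X * ρ).trace.re = (Xᴴ * Y * ρ).trace.re := by
  have h : (Xᴴ * Y * ρ)ᴴ = ρ * (Yᴴ * X) := by
    rw [conjTranspose_mul, conjTranspose_mul, conjTranspose_conjTranspose, hρ.eq]
  rw [← Complex.conj_re (Xᴴ * Y * ρ).trace, ← Complex.star_def, ← trace_conjTranspose, h,
    trace_mul_comm]

theorem four_mul_re_trace_conjTranspose_mul_mul_le (hρ : ρ.PosSemidef) (X Y : Matrix n n ℂ) :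
    4 * (Xᴴ * Y * ρ).trace.re ≤ 4 * (Xᴴ * X * ρ).trace.re + (Yᴴ * Y * ρ).trace.re := by
  have h := re_trace_conjTranspose_mul_self_mul_nonneg hρ ((2 : ℝ) • X - Y)
  have hexp : ((2 : ℝ) • X - Y)ᴴ * ((2 : ℝ) • X - Y)
      = (4 : ℝ) • (Xᴴ * X) - (2 : ℝ) • (Xᴴ * Y) - (2 : ℝ) • (Yᴴ * X) + Yᴴ * Y := by
    simp only [conjTranspose_sub, conjTranspose_smul, star_trivial, Matrix.sub_mul,
      Matrix.mul_sub, Matrix.smul_mul, Matrix.mul_smul, smul_sub, smul_smul]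
    norm_num
    abel
  rw [hexp] at h
  simp only [Matrix.add_mul, Matrix.sub_mul, Matrix.smul_mul, trace_add, trace_sub, trace_smul,
    smul_eq_mul, Complex.add_re, Complex.sub_re, Complex.smul_re] at h
  linarith [re_trace_conjTranspose_mul_mul_comm hρ.isHermitian X Y]

end Matrix

section UnionBound

variable {n : Type*} [Fintype n] [DecidableEq n] {ρ : Matrix n n ℂ}

noncomputable def unionBoundPotential (ρ M : Matrix n n ℂ) : ℝ :=
  4 * ((1 - M) * ρ).trace.re + (Mᴴ * M * ρ).trace.re

theorem unionBoundPotential_mul_le (hρ : ρ.PosSemidef) {p : Matrix n n ℂ}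
    (hp : IsStarProjection p) (M : Matrix n n ℂ) :
    unionBoundPotential ρ (p * M)
      ≤ unionBoundPotential ρ M + 4 * ((1 - p) * ρ).trace.re := by
  have hpH : pᴴ = p := hp.isSelfAdjoint
  have hq := hp.one_sub
  have hqH : (1 - p)ᴴ = 1 - p := hq.isSelfAdjoint
  have hqq : (1 - p) * (1 - p) = 1 - p := hq.isIdempotentElem
  have hXX : (1 - p)ᴴ * (1 - p) = 1 - p := by rw [hqH, hqq]
  have hXY : (1 - p)ᴴ * ((1 - p) * M) = M - p * M := by
    rw [hqH, ← Matrix.mul_assoc, hqq]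
    noncomm_ring
  have hYY : ((1 - p) * M)ᴴ * ((1 - p) * M) = Mᴴ * M - (p * M)ᴴ * (p * M) := by
    have hpp : p * p = p := hp.isIdempotentElem
    calc ((1 - p) * M)ᴴ * ((1 - p) * M) = Mᴴ * ((1 - p) * (1 - p)) * M := by
          rw [conjTranspose_mul, hqH]; noncomm_ring
      _ = Mᴴ * M - Mᴴ * (p * p) * M := by rw [hqq, hpp]; noncomm_ring
      _ = Mᴴ * M - (p * M)ᴴ * (p * M) := by rw [conjTranspose_mul, hpH]; noncomm_ring
  have h := four_mul_re_trace_conjTranspose_mul_mul_le hρ (1 - p) ((1 - p) * M)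
  rw [hXX, hXY, hYY] at h
  unfold unionBoundPotential
  simp only [Matrix.sub_mul, trace_sub, Complex.sub_re] at h ⊢
  linarith

theorem two_mul_re_trace_sub_le_unionBoundPotential (hρ : ρ.PosSemidef) (M : Matrix n n ℂ) :
    2 * ρ.trace.re - (Mᴴ * M * ρ).trace.re ≤ unionBoundPotential ρ M := by
  have h := re_trace_conjTranspose_mul_self_mul_nonneg hρ (1 - M)
  have hexp : (1 - M)ᴴ * (1 - M) = 1 - M - Mᴴ * 1 + Mᴴ * M := by
    rw [conjTranspose_sub, conjTranspose_one]; noncomm_ring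
  have hsymm := re_trace_conjTranspose_mul_mul_comm hρ.isHermitian M 1
  rw [hexp] at h
  simp only [Matrix.add_mul, Matrix.sub_mul, trace_add, trace_sub, Complex.add_re,
    Complex.sub_re, Matrix.one_mul, conjTranspose_one] at h hsymm
  unfold unionBoundPotential
  simp only [Matrix.sub_mul, trace_sub, Complex.sub_re, Matrix.one_mul]
  linarith

end UnionBound

theorem unionBoundPotential_descM_le {d : ℕ} {ρ : Matrix (Fin d) (Fin d) ℂ} (hρ : ρ.PosSemidef)
    {P : ℕ → Matrix (Fin d) (Fin d) ℂ} {t : ℕ}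
    (hP : ∀ i ∈ Finset.Icc 1 t, IsStarProjection (P i)) :
    unionBoundPotential ρ (descM P t)
      ≤ ρ.trace.re + 4 * ∑ i ∈ Finset.Icc 1 t, ((1 - P i) * ρ).trace.re := by
  induction t with
  | zero => simp [unionBoundPotential, descM]
  | succ t ih =>
    have hstep := unionBoundPotential_mul_le hρ
      (hP (t + 1) (Finset.mem_Icc.mpr ⟨by omega, le_rfl⟩)) (descM P t)
    have hprev := ih fun i hi => hP i (Finset.Icc_subset_Icc_right t.le_succ hi)
    rw [Finset.sum_Icc_succ_top (by omega)]
    change unionBoundPotential ρ (P (t + 1) * descM P t) ≤ _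
    linarith

theorem ascM_eq_conjTranspose_descM {d : ℕ} {P : ℕ → Matrix (Fin d) (Fin d) ℂ} {t : ℕ}
    (hP : ∀ i ∈ Finset.Icc 1 t, (P i).IsHermitian) : ascM P t = (descM P t)ᴴ := by
  induction t with
  | zero => simp [ascM, descM]
  | succ t ih =>
    change ascM P t * P (t + 1) = (P (t + 1) * descM P t)ᴴ
    rw [conjTranspose_mul, ih fun i hi => hP i (Finset.Icc_subset_Icc_right t.le_succ hi),
      (hP (t + 1) (Finset.mem_Icc.mpr ⟨by omega, le_rfl⟩)).eq]

theorem stmt6_general {d : ℕ} (ρ : Matrix (Fin d) (Fin d) ℂ)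
    (hρ : ρ.PosSemidef) (hρtr : ρ.trace = 1)
    (L : ℕ) (P : ℕ → Matrix (Fin d) (Fin d) ℂ)
    (hherm : ∀ i ∈ Finset.Icc 1 L, (P i).IsHermitian)
    (hidem : ∀ i ∈ Finset.Icc 1 L, P i * P i = P i) :
    1 - ((descM P L * ρ * ascM P L).trace).re
      ≤ 4 * ∑ i ∈ Finset.Icc 1 L, (((1 - P i) * ρ).trace).re := by
  have hupper := unionBoundPotential_descM_le hρ fun i hi => ⟨hidem i hi, hherm i hi⟩
  have hlower := two_mul_re_trace_sub_le_unionBoundPotential hρ (descM P L)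
  rw [ascM_eq_conjTranspose_descM hherm, trace_mul_comm, ← Matrix.mul_assoc]
  rw [hρtr, Complex.one_re] at hupper hlower
  linarith

theorem stmt6 {d : ℕ} (ρ : Matrix (Fin d) (Fin d) ℂ)
    (hρ : ρ.PosSemidef) (hρtr : ρ.trace = 1)
    (L : ℕ) (hL : 1 ≤ L) (P : ℕ → Matrix (Fin d) (Fin d) ℂ)
    (hherm : ∀ i ∈ Finset.Icc 1 L, (P i).IsHermitian)
    (hidem : ∀ i ∈ Finset.Icc 1 L, P i * P i = P i) :
    1 - ((descM P L * ρ * ascM P L).trace).re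
      ≤ 4 * ∑ i ∈ Finset.Icc 1 L, (((1 - P i) * ρ).trace).re :=
  stmt6_general ρ hρ hρtr L P hherm hidem
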